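/- Let n ∈ ℝ^d be a unit vector, B ∈ ℝ^{d×(d-1)} with BᵀB = I_{d-1} and Bᵀn = 0, and G ∈ ℝ^{d×d} a matrix with G B = 0 (no-slip condition on the tangent space). Then for any μ, P ∈ ℝ, with t = μ(G + Gᵀ)n + P n, the tangential component τ = (I − n nᵀ)t satisfies τ = μ (B Bᵀ) (G n). -/

import Mathlib

/-!
Completing the orthonormal tangent frame `B` by the unit normal `n` gives an orthogonal matrix,
so `I - n nᵀ = B Bᵀ`. This projector kills the pressure term `P n` (as `Bᵀ n = 0`) and the term
`Gᵀ n` (as `Bᵀ Gᵀ = (G B)ᵀ = 0`), leaving `μ B Bᵀ G n`.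
-/

open Matrix

namespace Matrix

variable {R m k l : Type*} [CommRing R] [Fintype m] [Fintype k] [Fintype l]
  [DecidableEq m] [DecidableEq k] [DecidableEq l]

theorem mul_transpose_add_mul_transpose_eq_one (B : Matrix m k R) (N : Matrix m l R)
    (hcard : Fintype.card m = Fintype.card k + Fintype.card l)
    (hB : Bᵀ * B = 1) (hBN : Bᵀ * N = 0) (hN : Nᵀ * N = 1) :
    B * Bᵀ + N * Nᵀ = 1 := by
  have hNB : Nᵀ * B = 0 := by simpa using congrArg transpose hBN
  have hgram : fromRows Bᵀ Nᵀ * fromCols B N = 1 := by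
    rw [fromRows_mul_fromCols, hB, hBN, hNB, hN, fromBlocks_one]
  rw [← fromCols_mul_fromRows]
  exact (mul_eq_one_comm_of_card_eq _ _ _ (by simpa using hcard)).mpr hgram

theorem mul_transpose_add_vecMulVec_eq_one (B : Matrix m k R) (n : m → R)
    (hcard : Fintype.card m = Fintype.card k + 1)
    (hB : Bᵀ * B = 1) (hBn : Bᵀ *ᵥ n = 0) (hn : n ⬝ᵥ n = 1) :
    B * Bᵀ + vecMulVec n n = 1 := by
  rw [vecMulVec_eq Unit, ← transpose_replicateCol]
  refine mul_transpose_add_mul_transpose_eq_one B _ (by simpa using hcard) hB ?_ ?_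
  · rw [← replicateCol_mulVec, hBn, replicateCol_zero]
  · rw [transpose_replicateCol, replicateRow_mul_replicateCol, hn]
    ext
    simp

end Matrix

/-- Simplification of the tangential component of the wall traction:
with no-slip condition `G B = 0`, traction `t = μ(G + Gᵀ)n + P n`, the
tangential part `τ = (I - n nᵀ) t` satisfies `τ = μ (B Bᵀ) (G n)`. -/
theorem tangential_traction_simplification (d : ℕ)
    (B : Matrix (Fin d) (Fin (d - 1)) ℝ) (n : Fin d → ℝ)
    (G : Matrix (Fin d) (Fin d) ℝ) (μ P : ℝ)
    (hB : Bᵀ * B = 1) (hBn : Bᵀ.mulVec n = 0)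
    (hn : n ⬝ᵥ n = 1) (hG : G * B = 0)
    (t τ : Fin d → ℝ)
    (ht : t = μ • ((G + Gᵀ).mulVec n) + P • n)
    (hτ : τ = (1 - vecMulVec n n).mulVec t) :
    τ = μ • ((B * Bᵀ).mulVec (G.mulVec n)) := by
  obtain rfl | hd := d.eq_zero_or_pos
  · exact Subsingleton.elim _ _
  have hcard : Fintype.card (Fin d) = Fintype.card (Fin (d - 1)) + 1 := by
    rw [Fintype.card_fin, Fintype.card_fin]; omega
  have hproj : 1 - vecMulVec n n = B * Bᵀ :=
    (eq_sub_of_add_eq (mul_transpose_add_vecMulVec_eq_one B n hcard hB hBn hn)).symm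
  have hGtn : Bᵀ *ᵥ (Gᵀ *ᵥ n) = 0 := by
    rw [mulVec_mulVec, ← transpose_mul, hG, transpose_zero, zero_mulVec]
  subst ht hτ
  simp [hproj, mulVec_add, add_mulVec, mulVec_smul, ← mulVec_mulVec, hBn, hGtn]
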